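/- arXiv:1807.00716 — 2 statements merged into one kernel-verified Lean document; each statement's English description precedes it below -/
import Mathlib

section
/- Let p be a prime and let ψ : ℚ_p → ℂˣ be a continuous additive character such that ψ(x) = 1 if and only if x ∈ ℤ_p. Let μ be the Haar measure on (ℚ_p,+) normalized so that μ(ℤ_p) = 1. Let χ : ℤ_pˣ → ℂˣ be a continuous homomorphism with conductor a(χ) = n ≥ 1. Then for every a ∈ ℚ_pˣ with v_p(a) ≠ −n, one has ∫_{ℤ_pˣ} ψ(a·y)·χ(y) dμ(y) = 0. -/
open MeasureTheory
open scoped ENNReal NNReal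

/-- Multiplication by an element of norm 1 preserves a Haar measure on `ℚ_[p]`
normalized so that `ℤ_[p]` has measure 1. -/
private lemma padic_mul_measurePreserving (p : ℕ) [Fact p.Prime]
    [MeasurableSpace ℚ_[p]] [BorelSpace ℚ_[p]]
    (μ : Measure ℚ_[p]) [μ.IsAddHaarMeasure] (hμ : μ {x : ℚ_[p] | ‖x‖ ≤ 1} = 1)
    (c : ℚ_[p]) (hc : ‖c‖ = 1) :
    MeasurePreserving (fun y : ℚ_[p] => c * y) μ μ := by
  have hc0 : c ≠ 0 := by intro h; rw [h] at hc; simp at hc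
  set e : ℚ_[p] ≃+ ℚ_[p] := (AddAut.mulLeft (Units.mk0 c hc0) : AddAut ℚ_[p]) with he
  have hecoe : ⇑e = fun y => c * y := by ext y; simp [he]
  have hecoes : ⇑e.symm = fun y => c⁻¹ * y := by ext y; simp [he, Units.smul_def]
  have hcont : Continuous e := by rw [hecoe]; exact continuous_const.mul continuous_id
  have hconts : Continuous e.symm := by rw [hecoes]; exact continuous_const.mul continuous_id
  haveI : (μ.map e).IsAddHaarMeasure := AddEquiv.isAddHaarMeasure_map μ e hcont hconts
  have hmeas : Measurable fun y : ℚ_[p] => c * y := (continuous_const.mul continuous_id).measurable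
  have hU : MeasurableSet {x : ℚ_[p] | ‖x‖ ≤ 1} :=
    (isClosed_le continuous_norm continuous_const).measurableSet
  have hpre : (fun y : ℚ_[p] => c * y) ⁻¹' {x | ‖x‖ ≤ 1} = {x | ‖x‖ ≤ 1} := by
    ext x; simp [Set.mem_setOf_eq, norm_mul, hc]
  have key := Measure.isAddLeftInvariant_eq_smul (μ.map e) μ
  have h1 : (μ.map e) {x : ℚ_[p] | ‖x‖ ≤ 1} = 1 := by
    rw [hecoe, Measure.map_apply hmeas hU, hpre, hμ]
  have h2 : (1 : ℝ≥0∞) = (Measure.addHaarScalarFactor (μ.map e) μ : ℝ≥0∞) * 1 := by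
    conv_lhs => rw [← h1, key]
    rw [Measure.smul_apply, hμ, ENNReal.smul_def, smul_eq_mul]
  rw [mul_one] at h2
  have h3 : Measure.addHaarScalarFactor (μ.map e) μ = 1 := by exact_mod_cast h2.symm
  refine ⟨hmeas, ?_⟩
  rw [← hecoe, key, h3, one_smul]

/-- If `χ : ℤ_pˣ → ℂˣ` is a continuous character of conductor `n ≥ 1`
(trivial on `1 + pⁿℤ_p` but on no larger such subgroup), then for every `a ∈ ℚ_pˣ` with
`v_p(a) ≠ -n` the Gauss sum `∫_{ℤ_pˣ} ψ(a·y)·χ(y) dμ(y)` vanishes. -/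
theorem stmt_2 (p : ℕ) [Fact p.Prime]
    [MeasurableSpace ℚ_[p]] [BorelSpace ℚ_[p]]
    (ψ : ℚ_[p] → ℂ) (hψcont : Continuous ψ)
    (hψadd : ∀ x y : ℚ_[p], ψ (x + y) = ψ x * ψ y)
    (hψabs : ∀ x : ℚ_[p], ‖ψ x‖ = 1)
    (hψker : ∀ x : ℚ_[p], ψ x = 1 ↔ ‖x‖ ≤ 1)
    (μ : Measure ℚ_[p]) [μ.IsAddHaarMeasure]
    (hμ : μ {x : ℚ_[p] | ‖x‖ ≤ 1} = 1)
    (χ : ℤ_[p]ˣ →* ℂˣ) (hχcont : Continuous fun u : ℤ_[p]ˣ => (χ u : ℂ))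
    (n : ℕ) (hn : 1 ≤ n)
    (htriv : ∀ u : ℤ_[p]ˣ, ‖(u : ℤ_[p]) - 1‖ ≤ (p : ℝ) ^ (-(n : ℤ)) → χ u = 1)
    (hleast : ∀ m : ℕ, m < n →
      ∃ u : ℤ_[p]ˣ, ‖(u : ℤ_[p]) - 1‖ ≤ (p : ℝ) ^ (-(m : ℤ)) ∧ χ u ≠ 1)
    (χext : ℚ_[p] → ℂ)
    (hχext : ∀ u : ℤ_[p]ˣ, χext ((u : ℤ_[p]) : ℚ_[p]) = (χ u : ℂ))
    (a : ℚ_[p]) (ha : a ≠ 0) (hval : a.valuation ≠ -(n : ℤ)) :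
    ∫ y in {y : ℚ_[p] | ‖y‖ = 1}, ψ (a * y) * χext y ∂μ = 0 := by
  have hp1 : (1:ℝ) < (p:ℝ) := by exact_mod_cast (Fact.out : p.Prime).one_lt
  set s : Set ℚ_[p] := {y : ℚ_[p] | ‖y‖ = 1} with hsdef
  have hs : MeasurableSet s := (isClosed_eq continuous_norm continuous_const).measurableSet
  set g : ℚ_[p] → ℂ := fun y => ψ (a * y) * χext y with hgdef
  have hnorm_a : ‖a‖ = (p:ℝ) ^ (-a.valuation) := Padic.norm_eq_zpow_neg_valuation ha
  -- units from elements of norm one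
  have mkU : ∀ y : ℚ_[p], ‖y‖ = 1 → ∃ U : ℤ_[p]ˣ, ((U : ℤ_[p]) : ℚ_[p]) = y := by
    intro y hy
    set z : ℤ_[p] := ⟨y, hy.le⟩ with hz
    have hz1 : ‖z‖ = 1 := hy
    exact ⟨(PadicInt.isUnit_iff.mpr hz1).unit, by rw [IsUnit.unit_spec]⟩
  -- χ is insensitive to perturbations of size ≤ p^{-n}
  have hχshift : ∀ (U V : ℤ_[p]ˣ),
      ‖((V : ℤ_[p]) : ℚ_[p]) - ((U : ℤ_[p]) : ℚ_[p])‖ ≤ (p:ℝ) ^ (-(n : ℤ)) →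
      (χ V : ℂ) = (χ U : ℂ) := by
    intro U V h
    have h1 : ((U⁻¹ * V : ℤ_[p]ˣ) : ℤ_[p]) - 1
        = (↑U⁻¹ : ℤ_[p]) * ((V : ℤ_[p]) - (U : ℤ_[p])) := by
      rw [mul_sub, Units.val_mul]; simp
    have h2 : ‖((U⁻¹ * V : ℤ_[p]ˣ) : ℤ_[p]) - 1‖ ≤ (p:ℝ) ^ (-(n : ℤ)) := by
      rw [h1, norm_mul, PadicInt.norm_units, one_mul]
      calc ‖(V : ℤ_[p]) - (U : ℤ_[p])‖
          = ‖((V : ℤ_[p]) : ℚ_[p]) - ((U : ℤ_[p]) : ℚ_[p])‖ := by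
            rw [PadicInt.norm_def]; push_cast; ring_nf
        _ ≤ _ := h
    have h3 : χ (U⁻¹ * V) = 1 := htriv _ h2
    have h4 : χ V = χ U := by
      have h5 : χ V = χ U * χ (U⁻¹ * V) := by rw [← map_mul, mul_inv_cancel_left]
      rw [h5, h3, mul_one]
    rw [h4]
  rcases hval.lt_or_gt with hlt | hgt
  · -- Case v(a) < -n : translate by t = pⁿ
    set t : ℚ_[p] := (p : ℚ_[p]) ^ n with htdef
    have htn : ‖t‖ = (p:ℝ) ^ (-(n : ℤ)) := by
      rw [htdef, norm_pow, Padic.norm_p, zpow_neg, zpow_natCast, inv_pow]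
    have htlt : ‖t‖ < 1 := by
      rw [htn, zpow_neg]
      exact inv_lt_one_of_one_lt₀ (one_lt_zpow₀ hp1 (by omega))
    have hmax : ∀ y : ℚ_[p], ‖y‖ = 1 → ‖t + y‖ = 1 := by
      intro y hy
      rw [Padic.add_eq_max_of_ne (by rw [hy]; exact htlt.ne), hy,
        max_eq_right htlt.le]
    have hpre : (fun y : ℚ_[p] => t + y) ⁻¹' s = s := by
      ext y
      simp only [hsdef, Set.mem_preimage, Set.mem_setOf_eq]
      constructor
      · intro h
        have hy : y = (t + y) + (-t) := by ring
        rw [hy, Padic.add_eq_max_of_ne (by rw [h, norm_neg]; exact htlt.ne'),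
          h, norm_neg, max_eq_left htlt.le]
      · exact hmax y
    have hsub := (measurePreserving_add_left μ t).setIntegral_preimage_emb
      (measurableEmbedding_addLeft t) g s
    rw [hpre] at hsub
    have hptw : ∀ y ∈ s, g (t + y) = ψ (a * t) * g y := by
      intro y hy
      have hy1 : ‖y‖ = 1 := hy
      obtain ⟨U, hU⟩ := mkU y hy1
      obtain ⟨V, hV⟩ := mkU (t + y) (hmax y hy1)
      have hχeq : χext (t + y) = χext y := by
        rw [← hV, ← hU, hχext, hχext]
        exact hχshift U V (by rw [hV, hU, add_sub_cancel_right, htn])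
      have hψeq : ψ (a * (t + y)) = ψ (a * t) * ψ (a * y) := by rw [mul_add, hψadd]
      show ψ (a * (t + y)) * χext (t + y) = ψ (a * t) * (ψ (a * y) * χext y)
      rw [hψeq, hχeq]; ring
    rw [setIntegral_congr_fun hs hptw, integral_const_mul] at hsub
    have hne : ψ (a * t) ≠ 1 := by
      intro h
      have hle : ‖a * t‖ ≤ 1 := (hψker _).mp h
      have heq : ‖a * t‖ = (p:ℝ) ^ (-a.valuation + -(n : ℤ)) := by
        rw [norm_mul, hnorm_a, htn, ← zpow_add₀ (by positivity : (p:ℝ) ≠ 0)]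
      rw [heq] at hle
      have h1 : (1:ℝ) < (p:ℝ) ^ (-a.valuation + -(n : ℤ)) :=
        one_lt_zpow₀ hp1 (by omega)
      linarith
    have hI : (ψ (a * t) - 1) * (∫ y in s, g y ∂μ) = 0 := by linear_combination hsub
    rcases mul_eq_zero.mp hI with h | h
    · exact absurd (sub_eq_zero.mp h) hne
    · exact h
  · -- Case -n < v(a) : multiply by a unit u with χ(u) ≠ 1
    obtain ⟨u, hu1, hu2⟩ := hleast (n - 1) (by omega)
    set c : ℚ_[p] := ((u : ℤ_[p]) : ℚ_[p]) with hcdef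
    have hc : ‖c‖ = 1 := by
      rw [hcdef, PadicInt.padic_norm_e_of_padicInt, PadicInt.norm_units]
    have hc0 : c ≠ 0 := by intro h; rw [h] at hc; simp at hc
    have hmp := padic_mul_measurePreserving p μ hμ c hc
    have hemb : MeasurableEmbedding (fun y : ℚ_[p] => c * y) := by
      simpa [smul_eq_mul] using measurableEmbedding_const_smul₀ (α := ℚ_[p]) hc0
    have hpre : (fun y : ℚ_[p] => c * y) ⁻¹' s = s := by
      ext y; simp [hsdef, Set.mem_setOf_eq, norm_mul, hc]
    have hsub := hmp.setIntegral_preimage_emb hemb g s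
    rw [hpre] at hsub
    have hc1 : ‖c - 1‖ ≤ (p:ℝ) ^ (1 - (n : ℤ)) := by
      have h' : ‖((u : ℤ_[p]) - 1 : ℤ_[p])‖ ≤ (p:ℝ) ^ (-(((n - 1 : ℕ)) : ℤ)) := hu1
      rw [PadicInt.norm_def] at h'
      have hco : (((u : ℤ_[p]) - 1 : ℤ_[p]) : ℚ_[p]) = c - 1 := by push_cast [hcdef]; ring
      rw [hco] at h'
      have hcast : (-(((n - 1 : ℕ)) : ℤ)) = 1 - (n : ℤ) := by omega
      rwa [hcast] at h'
    have hptw : ∀ y ∈ s, g (c * y) = (χ u : ℂ) * g y := by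
      intro y hy
      have hy1 : ‖y‖ = 1 := hy
      obtain ⟨U, hU⟩ := mkU y hy1
      have hχeq : χext (c * y) = (χ u : ℂ) * χext y := by
        have hcoe : (((u * U : ℤ_[p]ˣ) : ℤ_[p]) : ℚ_[p]) = c * y := by
          rw [Units.val_mul]; push_cast [hcdef, hU]; ring
        rw [← hcoe, hχext, map_mul, Units.val_mul, ← hU, hχext]
      have hψeq : ψ (a * (c * y)) = ψ (a * y) := by
        have hsp : a * (c * y) = a * y + a * y * (c - 1) := by ring
        have hbd : ‖a * y * (c - 1)‖ ≤ 1 := by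
          rw [norm_mul, norm_mul, hy1, mul_one, hnorm_a]
          calc (p:ℝ) ^ (-a.valuation) * ‖c - 1‖
              ≤ (p:ℝ) ^ (-a.valuation) * (p:ℝ) ^ (1 - (n : ℤ)) :=
                mul_le_mul_of_nonneg_left hc1 (by positivity)
            _ = (p:ℝ) ^ (-a.valuation + (1 - (n : ℤ))) := by
                rw [← zpow_add₀ (by positivity : (p:ℝ) ≠ 0)]
            _ ≤ 1 := zpow_le_one_of_nonpos₀ hp1.le (by omega)
        rw [hsp, hψadd, (hψker _).mpr hbd, mul_one]
      show ψ (a * (c * y)) * χext (c * y) = (χ u : ℂ) * (ψ (a * y) * χext y)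
      rw [hψeq, hχeq]; ring
    rw [setIntegral_congr_fun hs hptw, integral_const_mul] at hsub
    have hne : (χ u : ℂ) ≠ 1 := by
      intro h
      exact hu2 (Units.ext (by simpa using h))
    have hI : ((χ u : ℂ) - 1) * (∫ y in s, g y ∂μ) = 0 := by linear_combination hsub
    rcases mul_eq_zero.mp hI with h | h
    · exact absurd (sub_eq_zero.mp h) hne
    · exact h
end

section
/- Let p be a prime and let ψ : ℚ_p → ℂˣ be a continuous additive character such that ψ(x) = 1 if and only if x ∈ ℤ_p. Let μ be the Haar measure on (ℚ_p,+) normalized so that μ(ℤ_p) = 1. Let k ≥ 1 be an integer, let χ : ℤ_pˣ → ℂˣ be a continuous homomorphism with conductor a(χ), and let a ∈ ℚ_pˣ with |a|_p > 1. If a(χ) > max{k, −v_p(a)}, then ∫_{1 + p^kℤ_p} ψ(a·y)·χ(y) dμ(y) = 0. -/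
open MeasureTheory
open scoped NNReal ENNReal

/-- Let `χ : ℤ_pˣ → ℂˣ` be a continuous character of conductor `c`,
`k ≥ 1`, and `a ∈ ℚ_pˣ` with `|a|_p > 1`.  If `c > max{k, -v_p(a)}`, then
`∫_{1 + p^kℤ_p} ψ(a·y)·χ(y) dμ(y) = 0`. -/
theorem stmt_4 (p : ℕ) [Fact p.Prime]
    [MeasurableSpace ℚ_[p]] [BorelSpace ℚ_[p]]
    (ψ : ℚ_[p] → ℂ) (hψcont : Continuous ψ)
    (hψadd : ∀ x y : ℚ_[p], ψ (x + y) = ψ x * ψ y)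
    (hψabs : ∀ x : ℚ_[p], ‖ψ x‖ = 1)
    (hψker : ∀ x : ℚ_[p], ψ x = 1 ↔ ‖x‖ ≤ 1)
    (μ : Measure ℚ_[p]) [μ.IsAddHaarMeasure]
    (hμ : μ {x : ℚ_[p] | ‖x‖ ≤ 1} = 1)
    (χ : ℤ_[p]ˣ →* ℂˣ) (hχcont : Continuous fun u : ℤ_[p]ˣ => (χ u : ℂ))
    (c : ℕ)
    (htriv : ∀ u : ℤ_[p]ˣ, ‖(u : ℤ_[p]) - 1‖ ≤ (p : ℝ) ^ (-(c : ℤ)) → χ u = 1)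
    (hleast : ∀ m : ℕ, m < c →
      ∃ u : ℤ_[p]ˣ, ‖(u : ℤ_[p]) - 1‖ ≤ (p : ℝ) ^ (-(m : ℤ)) ∧ χ u ≠ 1)
    (χext : ℚ_[p] → ℂ)
    (hχext : ∀ u : ℤ_[p]ˣ, χext ((u : ℤ_[p]) : ℚ_[p]) = (χ u : ℂ))
    (k : ℕ) (hk : 1 ≤ k)
    (a : ℚ_[p]) (ha : 1 < ‖a‖)
    (hcond : max (k : ℤ) (-a.valuation) < (c : ℤ)) :
    ∫ y in {y : ℚ_[p] | ‖y - 1‖ ≤ (p : ℝ) ^ (-(k : ℤ))}, ψ (a * y) * χext y ∂μ = 0 := by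
  classical
  have hp1 : (1:ℝ) < (p:ℝ) := by exact_mod_cast (Fact.out : p.Prime).one_lt
  have hp0 : (0:ℝ) < (p:ℝ) := lt_trans one_pos hp1
  have hmono : ∀ i j : ℤ, i ≤ j → (p:ℝ) ^ i ≤ (p:ℝ) ^ j :=
    fun i j h => zpow_le_zpow_right₀ hp1.le h
  set S : Set ℚ_[p] := {y : ℚ_[p] | ‖y - 1‖ ≤ (p : ℝ) ^ (-(k : ℤ))} with hSdef
  have hSmeas : MeasurableSet S := by
    have : S = Metric.closedBall (1:ℚ_[p]) ((p:ℝ) ^ (-(k:ℤ))) := by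
      ext y; simp [S, Metric.mem_closedBall, dist_eq_norm]
    rw [this]; exact measurableSet_closedBall
  have hpk1 : (p:ℝ) ^ (-(k:ℤ)) < 1 := by
    have : (p:ℝ) ^ (-(k:ℤ)) < (p:ℝ) ^ (0:ℤ) :=
      zpow_lt_zpow_right₀ hp1 (by omega)
    simpa using this
  have hSnorm : ∀ y ∈ S, ‖y‖ = 1 := by
    intro y hy
    have hy' : ‖y - 1‖ ≤ (p:ℝ) ^ (-(k:ℤ)) := hy
    have h1 : ‖y - 1‖ < ‖(1:ℚ_[p])‖ := by
      rw [norm_one]; exact lt_of_le_of_lt hy' hpk1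
    have h2 : ‖(y - 1) + 1‖ = max ‖y - 1‖ ‖(1:ℚ_[p])‖ :=
      Padic.add_eq_max_of_ne (ne_of_lt h1)
    have h3 : (y - 1) + 1 = y := by ring
    rw [h3] at h2
    rw [h2, norm_one]; exact max_eq_right (le_of_lt (lt_of_le_of_lt hy' hpk1))
  -- choose the unit u
  have hkc : (k:ℤ) < c := lt_of_le_of_lt (le_max_left _ _) hcond
  have hvc : -a.valuation < c := lt_of_le_of_lt (le_max_right _ _) hcond
  have hc1 : 1 ≤ c := by omega
  set m : ℕ := c - 1 with hm
  have hmc : m < c := by omega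
  have hkm : -(m:ℤ) ≤ -(k:ℤ) := by omega
  have hvm : -a.valuation ≤ (m:ℤ) := by omega
  obtain ⟨u, hu_close, hu_ne⟩ := hleast m hmc
  set w : ℚ_[p] := ((u : ℤ_[p]) : ℚ_[p]) with hw
  have hw_norm : ‖w‖ = 1 := by
    rw [hw, ← PadicInt.norm_def]; exact PadicInt.norm_units u
  have hw0 : w ≠ 0 := by
    intro h; rw [h, norm_zero] at hw_norm; norm_num at hw_norm
  have hw_close : ‖w - 1‖ ≤ (p:ℝ) ^ (-(m:ℤ)) := by
    have hcast : (((u : ℤ_[p]) - 1 : ℤ_[p]) : ℚ_[p]) = w - 1 := by push_cast; ring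
    rw [← hcast, ← PadicInt.norm_def]; exact hu_close
  have hwk : ‖w - 1‖ ≤ (p:ℝ) ^ (-(k:ℤ)) := le_trans hw_close (hmono _ _ hkm)
  have ha0 : a ≠ 0 := by
    intro h; rw [h, norm_zero] at ha; linarith
  have hanorm : ‖a‖ = (p:ℝ) ^ (-a.valuation) := Padic.norm_eq_zpow_neg_valuation ha0
  have haw : ‖a * (w - 1)‖ ≤ 1 := by
    rw [norm_mul, hanorm]
    calc (p:ℝ) ^ (-a.valuation) * ‖w - 1‖
        ≤ (p:ℝ) ^ (m:ℤ) * (p:ℝ) ^ (-(m:ℤ)) := by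
          apply mul_le_mul (hmono _ _ (by omega)) hw_close (norm_nonneg _)
            (zpow_nonneg hp0.le _)
      _ = 1 := by
          rw [← zpow_add₀ (ne_of_gt hp0)]; simp
  -- S is invariant under multiplication by w
  have hSmul : ∀ v : ℚ_[p], ‖v - 1‖ ≤ (p:ℝ) ^ (-(k:ℤ)) → ∀ y ∈ S, v * y ∈ S := by
    intro v hv y hy
    have hy' : ‖y - 1‖ ≤ (p:ℝ) ^ (-(k:ℤ)) := hy
    have hv1 : ‖v‖ ≤ 1 := by
      have h4 : v = (v - 1) + 1 := by ring
      calc ‖v‖ = ‖(v-1) + 1‖ := by rw [← h4]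
        _ ≤ max ‖v - 1‖ ‖(1:ℚ_[p])‖ := Padic.nonarchimedean _ _
        _ ≤ 1 := max_le (le_trans hv hpk1.le) (le_of_eq norm_one)
    have h5 : v * y - 1 = v * (y - 1) + (v - 1) := by ring
    show ‖v * y - 1‖ ≤ (p:ℝ) ^ (-(k:ℤ))
    rw [h5]
    refine le_trans (Padic.nonarchimedean _ _) (max_le ?_ hv)
    rw [norm_mul]
    calc ‖v‖ * ‖y - 1‖ ≤ 1 * ((p:ℝ) ^ (-(k:ℤ))) :=
          mul_le_mul hv1 hy' (norm_nonneg _) zero_le_one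
      _ = (p:ℝ) ^ (-(k:ℤ)) := one_mul _
  have hwinv_close : ‖w⁻¹ - 1‖ ≤ (p:ℝ) ^ (-(k:ℤ)) := by
    have h6 : w⁻¹ - 1 = w⁻¹ * (1 - w) := by field_simp
    rw [h6, norm_mul, norm_inv, hw_norm, inv_one, one_mul, norm_sub_rev]
    exact hwk
  have hSiff : ∀ y : ℚ_[p], w * y ∈ S ↔ y ∈ S := by
    intro y
    constructor
    · intro h
      have := hSmul w⁻¹ hwinv_close _ h
      rwa [inv_mul_cancel_left₀ hw0] at this
    · exact hSmul w hwk y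
  -- character values
  have hψw : ∀ y ∈ S, ψ (a * (w * y)) = ψ (a * y) := by
    intro y hy
    have h7 : a * (w * y) = a * y + a * (w - 1) * y := by ring
    rw [h7, hψadd]
    have h8 : ψ (a * (w - 1) * y) = 1 := by
      refine (hψker _).2 ?_
      rw [norm_mul, hSnorm y hy, mul_one]
      exact haw
    rw [h8, mul_one]
  have hχw : ∀ y ∈ S, χext (w * y) = (χ u : ℂ) * χext y := by
    intro y hy
    have hy1 : ‖y‖ = 1 := hSnorm y hy
    set z : ℤ_[p] := ⟨y, le_of_eq hy1⟩ with hz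
    have hz1 : ‖z‖ = 1 := by rw [PadicInt.norm_def]; exact hy1
    obtain ⟨v, hv⟩ := PadicInt.isUnit_iff.2 hz1
    have hvy : (((v : ℤ_[p]) : ℚ_[p])) = y := by rw [hv]
    have h9 : (((u * v : ℤ_[p]ˣ) : ℤ_[p]) : ℚ_[p]) = w * y := by
      rw [Units.val_mul]; push_cast [hvy]; rw [hw]
    calc χext (w * y) = χext (((u * v : ℤ_[p]ˣ) : ℤ_[p]) : ℚ_[p]) := by rw [h9]
      _ = ((χ (u * v) : ℂˣ) : ℂ) := hχext _
      _ = (χ u : ℂ) * (χ v : ℂ) := by rw [map_mul, Units.val_mul]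
      _ = (χ u : ℂ) * χext y := by rw [← hvy, hχext]
  -- the measure is invariant under multiplication by w
  set ν : Measure ℚ_[p] := μ.map (fun x => w * x) with hν
  have hcontmul : Continuous (fun x : ℚ_[p] => w * x) := continuous_const.mul continuous_id
  have hmeasmul : Measurable (fun x : ℚ_[p] => w * x) := hcontmul.measurable
  have hZ : MeasurableSet {x : ℚ_[p] | ‖x‖ ≤ 1} := by
    have : {x : ℚ_[p] | ‖x‖ ≤ 1} = Metric.closedBall 0 1 := by
      ext x; simp [dist_eq_norm]
    rw [this]; exact measurableSet_closedBall
  have hpre : (fun x : ℚ_[p] => w * x) ⁻¹' {x : ℚ_[p] | ‖x‖ ≤ 1} = {x : ℚ_[p] | ‖x‖ ≤ 1} := by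
    ext x; simp [norm_mul, hw_norm]
  let eAdd : ℚ_[p] ≃+ ℚ_[p] :=
    { Equiv.mulLeft₀ w hw0 with map_add' := fun x y => mul_add w x y }
  have heAdd : ⇑eAdd = fun x : ℚ_[p] => w * x := rfl
  have heAddsymm : ⇑eAdd.symm = fun x : ℚ_[p] => w⁻¹ * x := rfl
  haveI hνHaar : ν.IsAddHaarMeasure := by
    have : ν = μ.map eAdd := by rw [hν, heAdd]
    rw [this]
    exact AddEquiv.isAddHaarMeasure_map μ eAdd
      (by rw [heAdd]; exact hcontmul)
      (by rw [heAddsymm]; exact continuous_const.mul continuous_id)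
  have hν1 : ν {x : ℚ_[p] | ‖x‖ ≤ 1} = 1 := by
    rw [hν, Measure.map_apply hmeasmul hZ, hpre, hμ]
  have hscal : ν = μ := by
    have h := Measure.isAddLeftInvariant_eq_smul ν μ
    have h2 : (Measure.addHaarScalarFactor ν μ : ℝ≥0∞) = 1 := by
      have h3 := hν1
      rw [h] at h3
      simp only [Measure.smul_apply, hμ, ENNReal.smul_def, smul_eq_mul, mul_one] at h3
      exact h3
    have h4 : Measure.addHaarScalarFactor ν μ = 1 := by exact_mod_cast h2
    rw [h, h4, one_smul]
  -- change of variables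
  set f : ℚ_[p] → ℂ := fun y => ψ (a * y) * χext y with hf
  let e : ℚ_[p] ≃ᵐ ℚ_[p] := (Homeomorph.mulLeft₀ w hw0).toMeasurableEquiv
  have he : ⇑e = fun x : ℚ_[p] => w * x := rfl
  have key : (∫ y in S, f y ∂μ) = (χ u : ℂ) * ∫ y in S, f y ∂μ := by
    conv_lhs => rw [← integral_indicator hSmeas, ← hscal, hν]
    rw [show μ.map (fun x : ℚ_[p] => w * x) = μ.map e by rw [he]]
    rw [MeasureTheory.integral_map_equiv e (S.indicator f)]
    have hind : ∀ x : ℚ_[p], S.indicator f (e x) = S.indicator (fun y => (χ u : ℂ) * f y) x := by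
      intro x
      have hex : e x = w * x := rfl
      rw [hex]
      by_cases hx : x ∈ S
      · rw [Set.indicator_of_mem hx, Set.indicator_of_mem ((hSiff x).2 hx)]
        show ψ (a * (w * x)) * χext (w * x) = (χ u : ℂ) * (ψ (a * x) * χext x)
        rw [hψw x hx, hχw x hx]; ring
      · rw [Set.indicator_of_notMem hx,
          Set.indicator_of_notMem (fun h => hx ((hSiff x).1 h))]
    simp_rw [hind]
    have hconst : ∀ x : ℚ_[p], S.indicator (fun y => (χ u : ℂ) * f y) x
        = (χ u : ℂ) * S.indicator f x := by
      intro x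
      by_cases hx : x ∈ S
      · rw [Set.indicator_of_mem hx, Set.indicator_of_mem hx]
      · rw [Set.indicator_of_notMem hx, Set.indicator_of_notMem hx, mul_zero]
    simp_rw [hconst]
    rw [MeasureTheory.integral_const_mul, integral_indicator hSmeas]
  have hχu : (χ u : ℂ) ≠ 1 := by
    intro h
    exact hu_ne (Units.ext (by rwa [Units.val_one]))
  have hfin : ((χ u : ℂ) - 1) * (∫ y in S, f y ∂μ) = 0 := by
    linear_combination -key
  rcases mul_eq_zero.1 hfin with h | h
  · exact absurd (by linear_combination h) hχu
  · exact h
end
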